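/- arXiv:1702.08142 — 2 statements merged into one kernel-verified Lean document; each statement's English description precedes it below -/
import Mathlib

section
/- (Theorem 4, θ-coordinates) For every θ ∈ ℝ^{S⁺} and all x, y, z ∈ S⁺, the Riemannian connection coefficient Γ_{xyz}(θ) = (1/2)(∂g_{yz}(θ)/∂θ(x) + ∂g_{xz}(θ)/∂θ(y) − ∂g_{xy}(θ)/∂θ(z)), where g_{xy}(θ) = ∂²ψ(θ)/∂θ(x)∂θ(y), satisfies Γ_{xyz}(θ) = (1/2) Σ_{s∈S} (ζ(x,s) − η_θ(x)) (ζ(y,s) − η_θ(y)) (ζ(z,s) − η_θ(z)) p_θ(s). -/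
/-- `ψ(θ) = log Σ_{x∈S} exp(Σ_{s∈S⁺, s≤x} θ(s))`. -/
noncomputable def psi {S : Type*} [Fintype S] [PartialOrder S] [OrderBot S]
    [DecidableEq S] [DecidableRel ((· ≤ ·) : S → S → Prop)]
    (θ : {x : S // x ≠ ⊥} → ℝ) : ℝ :=
  Real.log (∑ x : S, Real.exp (∑ s : {x : S // x ≠ ⊥}, if (s : S) ≤ x then θ s else 0))

/-- `p_θ(x) = exp(Σ_{s∈S⁺, s≤x} θ(s) − ψ(θ))`. -/
noncomputable def pTheta {S : Type*} [Fintype S] [PartialOrder S] [OrderBot S]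
    [DecidableEq S] [DecidableRel ((· ≤ ·) : S → S → Prop)]
    (θ : {x : S // x ≠ ⊥} → ℝ) (x : S) : ℝ :=
  Real.exp ((∑ s : {x : S // x ≠ ⊥}, if (s : S) ≤ x then θ s else 0) - psi θ)

/-- `η_θ(x) = Σ_{s ≥ x} p_θ(s)`. -/
noncomputable def etaTheta {S : Type*} [Fintype S] [PartialOrder S] [OrderBot S]
    [DecidableEq S] [DecidableRel ((· ≤ ·) : S → S → Prop)]
    (θ : {x : S // x ≠ ⊥} → ℝ) (x : S) : ℝ :=
  ∑ s ∈ Finset.univ.filter (fun s => x ≤ s), pTheta θ s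

/-- Partial derivative of a function `f : ℝ^{S⁺} → ℝ` with respect to the coordinate `x`. -/
noncomputable def pd {S : Type*} [Fintype S] [PartialOrder S] [OrderBot S] [DecidableEq S]
    (f : ({x : S // x ≠ ⊥} → ℝ) → ℝ) (x : {x : S // x ≠ ⊥})
    (θ : {x : S // x ≠ ⊥} → ℝ) : ℝ :=
  deriv (fun t => f (Function.update θ x t)) (θ x)

/-!
`ψ` is the cumulant generating function of the statistics `ζ(x, ·)` under `p_θ`, so its first
three partial derivatives are the mean `η_θ(x)`, the covariance and the third central moment
`κ_{xyz}` of these statistics. Differentiating a centred moment produces no terms from the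
centring constants, because centred first moments vanish. Since `κ` is symmetric in its indices,
`Γ_{xyz} = ½ (κ_{xyz} + κ_{yxz} − κ_{zxy}) = ½ κ_{xyz}`.
-/

open Finset Function

namespace LogLinearPoset

noncomputable def zeta {S : Type*} [PartialOrder S] [OrderBot S]
    [DecidableRel ((· ≤ ·) : S → S → Prop)] (u : {x : S // x ≠ ⊥}) (x : S) : ℝ :=
  if (u : S) ≤ x then 1 else 0

variable {S : Type*} [Fintype S] [PartialOrder S] [OrderBot S]
    [DecidableEq S] [DecidableRel ((· ≤ ·) : S → S → Prop)]

noncomputable def exponent (θ : {x : S // x ≠ ⊥} → ℝ) (x : S) : ℝ :=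
  ∑ s : {x : S // x ≠ ⊥}, if (s : S) ≤ x then θ s else 0

noncomputable def partitionFn (θ : {x : S // x ≠ ⊥} → ℝ) : ℝ :=
  ∑ x : S, Real.exp (exponent θ x)

noncomputable def centered (θ : {x : S // x ≠ ⊥} → ℝ) (u : {x : S // x ≠ ⊥}) (s : S) : ℝ :=
  zeta u s - etaTheta θ u

noncomputable def covariance (θ : {x : S // x ≠ ⊥} → ℝ) (a b : {x : S // x ≠ ⊥}) : ℝ :=
  ∑ s : S, centered θ a s * centered θ b s * pTheta θ s

noncomputable def thirdCentralMoment (θ : {x : S // x ≠ ⊥} → ℝ) (a b c : {x : S // x ≠ ⊥}) : ℝ :=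
  ∑ s : S, centered θ a s * centered θ b s * centered θ c s * pTheta θ s

variable (θ : {x : S // x ≠ ⊥} → ℝ)

theorem exponent_update (u : {x : S // x ≠ ⊥}) (t : ℝ) (x : S) :
    exponent (update θ u t) x = exponent θ x + (t - θ u) * zeta u x := by
  unfold exponent zeta
  rw [← add_sum_erase _ _ (mem_univ u), ← add_sum_erase _ _ (mem_univ u),
    sum_congr rfl fun s hs => by rw [update_of_ne (ne_of_mem_erase hs)]]
  split_ifs
  · rw [update_self]; ring
  · ring

theorem hasDerivAt_exponent_update (u : {x : S // x ≠ ⊥}) (x : S) :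
    HasDerivAt (fun t => exponent (update θ u t) x) (zeta u x) (θ u) := by
  simp only [exponent_update]
  simpa using (((hasDerivAt_id (θ u)).sub_const (θ u)).mul_const (zeta u x)).const_add
    (exponent θ x)

theorem partitionFn_pos : 0 < partitionFn θ :=
  haveI : Nonempty S := ⟨⊥⟩
  sum_pos (fun _ _ => Real.exp_pos _) univ_nonempty

theorem psi_eq_log_partitionFn : psi θ = Real.log (partitionFn θ) := rfl

theorem pTheta_eq_exp_div (s : S) : pTheta θ s = Real.exp (exponent θ s) / partitionFn θ := by
  rw [pTheta, psi_eq_log_partitionFn, Real.exp_sub, Real.exp_log (partitionFn_pos θ)]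
  rfl

theorem sum_pTheta : ∑ s : S, pTheta θ s = 1 := by
  simp only [pTheta_eq_exp_div, ← sum_div]
  exact div_self (partitionFn_pos θ).ne'

theorem etaTheta_eq_sum (u : {x : S // x ≠ ⊥}) :
    etaTheta θ u = ∑ s : S, zeta u s * pTheta θ s := by
  rw [etaTheta, sum_filter]
  exact sum_congr rfl fun s _ => by by_cases h : (u : S) ≤ s <;> simp [zeta, h]

theorem sum_centered_mul_pTheta (u : {x : S // x ≠ ⊥}) :
    ∑ s : S, centered θ u s * pTheta θ s = 0 := by
  simp only [centered, sub_mul, sum_sub_distrib, ← mul_sum, sum_pTheta, ← etaTheta_eq_sum]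
  ring

theorem hasDerivAt_partitionFn_update (u : {x : S // x ≠ ⊥}) :
    HasDerivAt (fun t => partitionFn (update θ u t))
      (∑ x : S, zeta u x * Real.exp (exponent θ x)) (θ u) := by
  refine HasDerivAt.fun_sum fun x _ => ?_
  simpa [mul_comm] using (hasDerivAt_exponent_update θ u x).exp

theorem hasDerivAt_psi_update (u : {x : S // x ≠ ⊥}) :
    HasDerivAt (fun t => psi (update θ u t)) (etaTheta θ u) (θ u) := by
  have h := (hasDerivAt_partitionFn_update θ u).log (by simpa using (partitionFn_pos θ).ne')
  refine h.congr_deriv ?_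
  rw [update_eq_self, etaTheta_eq_sum, sum_div]
  simp only [pTheta_eq_exp_div, mul_div_assoc]

theorem hasDerivAt_pTheta_update (u : {x : S // x ≠ ⊥}) (s : S) :
    HasDerivAt (fun t => pTheta (update θ u t) s) (centered θ u s * pTheta θ s) (θ u) :=
  ((hasDerivAt_exponent_update θ u s).sub (hasDerivAt_psi_update θ u)).exp.congr_deriv
    (by simp [pTheta, exponent, centered, mul_comm])

theorem hasDerivAt_etaTheta_update (a b : {x : S // x ≠ ⊥}) :
    HasDerivAt (fun t => etaTheta (update θ a t) b) (covariance θ a b) (θ a) := by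
  simp only [etaTheta_eq_sum]
  refine (HasDerivAt.fun_sum fun s _ => (hasDerivAt_pTheta_update θ a s).const_mul (zeta b s))
    |>.congr_deriv ?_
  -- `ζ(b, ·)` and its centred version differ by a constant, which `Σ (ζ(a,·) − η(a)) p` kills.
  have hshift : ∀ s, zeta b s * (centered θ a s * pTheta θ s)
      = centered θ a s * centered θ b s * pTheta θ s
        + etaTheta θ b * (centered θ a s * pTheta θ s) := fun s => by
    simp only [centered]; ring
  simp only [covariance, hshift, sum_add_distrib, ← mul_sum, sum_centered_mul_pTheta, mul_zero,
    add_zero]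

theorem hasDerivAt_centered_update (a b : {x : S // x ≠ ⊥}) (s : S) :
    HasDerivAt (fun t => centered (update θ a t) b s) (-covariance θ a b) (θ a) := by
  simpa [centered] using (hasDerivAt_etaTheta_update θ a b).const_sub (zeta b s)

theorem hasDerivAt_covariance_update (a b c : {x : S // x ≠ ⊥}) :
    HasDerivAt (fun t => covariance (update θ a t) b c) (thirdCentralMoment θ a b c) (θ a) := by
  refine (HasDerivAt.fun_sum fun s _ => ((hasDerivAt_centered_update θ a b s).fun_mul
    (hasDerivAt_centered_update θ a c s)).fun_mul (hasDerivAt_pTheta_update θ a s))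
    |>.congr_deriv ?_
  have hexpand : ∀ s, (-covariance θ a b * centered θ c s
        + centered θ b s * -covariance θ a c) * pTheta θ s
        + centered θ b s * centered θ c s * (centered θ a s * pTheta θ s)
      = centered θ a s * centered θ b s * centered θ c s * pTheta θ s
        - covariance θ a b * (centered θ c s * pTheta θ s)
        - covariance θ a c * (centered θ b s * pTheta θ s) := fun s => by ring
  simp only [update_eq_self, hexpand, sum_sub_distrib, ← mul_sum, sum_centered_mul_pTheta,
    mul_zero, sub_zero, thirdCentralMoment]

theorem pd_psi (u : {x : S // x ≠ ⊥}) :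
    pd psi u = fun θ : {x : S // x ≠ ⊥} → ℝ => etaTheta θ u :=
  funext fun θ => (hasDerivAt_psi_update θ u).deriv

theorem pd_etaTheta (a b : {x : S // x ≠ ⊥}) :
    pd (fun θ : {x : S // x ≠ ⊥} → ℝ => etaTheta θ b) a = fun θ => covariance θ a b :=
  funext fun θ => (hasDerivAt_etaTheta_update θ a b).deriv

theorem pd_covariance (a b c : {x : S // x ≠ ⊥}) :
    pd (fun θ => covariance θ b c) a θ = thirdCentralMoment θ a b c :=
  (hasDerivAt_covariance_update θ a b c).deriv

theorem thirdCentralMoment_swap (a b c : {x : S // x ≠ ⊥}) :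
    thirdCentralMoment θ b a c = thirdCentralMoment θ a b c :=
  sum_congr rfl fun _ _ => by ring

theorem thirdCentralMoment_rotate (a b c : {x : S // x ≠ ⊥}) :
    thirdCentralMoment θ c a b = thirdCentralMoment θ a b c :=
  sum_congr rfl fun _ _ => by ring

end LogLinearPoset

open LogLinearPoset in
/-- (Theorem 4, θ-coordinates) With `g_{xy}(θ) = ∂²ψ(θ)/∂θ(x)∂θ(y)`, the Riemannian connection
coefficient `Γ_{xyz}(θ) = (1/2)(∂g_{yz}/∂θ(x) + ∂g_{xz}/∂θ(y) − ∂g_{xy}/∂θ(z))` satisfies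
`Γ_{xyz}(θ) = (1/2) Σ_{s∈S} (ζ(x,s) − η_θ(x))(ζ(y,s) − η_θ(y))(ζ(z,s) − η_θ(z)) p_θ(s)`. -/
theorem gamma_theta {S : Type*} [Fintype S] [PartialOrder S] [OrderBot S]
    [DecidableEq S] [DecidableRel ((· ≤ ·) : S → S → Prop)]
    (θ : {x : S // x ≠ ⊥} → ℝ) (x y z : {x : S // x ≠ ⊥}) :
    (1 / 2 : ℝ) * (pd (pd (pd psi z) y) x θ + pd (pd (pd psi z) x) y θ - pd (pd (pd psi y) x) z θ)
      = (1 / 2 : ℝ) * ∑ s : S,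
          ((if (x : S) ≤ s then (1 : ℝ) else 0) - etaTheta θ (x : S))
            * ((if (y : S) ≤ s then (1 : ℝ) else 0) - etaTheta θ (y : S))
            * ((if (z : S) ≤ s then (1 : ℝ) else 0) - etaTheta θ (z : S))
            * pTheta θ s := by
  simp only [pd_psi, pd_etaTheta, pd_covariance]
  rw [thirdCentralMoment_swap θ x y z, thirdCentralMoment_rotate θ x y z, add_sub_cancel_right]
  rfl
end

section
/- (Converse of θ-invariance) Let n ≥ 1 and let p and p' be two strictly positive probability matrices on [n]×[n] such that θ_{p'}(i,j) = θ_p(i,j) for every (i,j) with i ≥ 2 and j ≥ 2. Then there exist strictly positive vectors r, s ∈ ℝ^n such that p'_{ij} = p_{ij} r_i s_j for all i, j ∈ [n]. -/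
local instance {S : Type*} [PartialOrder S] [DecidableEq S]
    [DecidableRel ((· ≤ ·) : S → S → Prop)] :
    DecidableRel ((· < ·) : S → S → Prop) :=
  fun a b => decidable_of_iff (a ≤ b ∧ a ≠ b) lt_iff_le_and_ne.symm

/-- `θ_p(x) = Σ_{s ≤ x} μ(s,x) log p(s)` on `S = [n]×[n]` ordered componentwise. -/
noncomputable def thetaP {n : ℕ} (mu : Fin n × Fin n → Fin n × Fin n → ℤ)
    (p : Fin n × Fin n → ℝ) (x : Fin n × Fin n) : ℝ :=
  ∑ s ∈ Finset.univ.filter (fun s => s ≤ x), (mu s x : ℝ) * Real.log (p s)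

/-- (Converse of θ-invariance) If two strictly positive probability matrices `p, p'` on
`[n]×[n]` satisfy `θ_{p'}(i,j) = θ_p(i,j)` for every `(i,j)` with `i ≥ 2` and `j ≥ 2`
(in `Fin n` indexing: both coordinates nonzero), then there exist strictly positive vectors
`r, s ∈ ℝ^n` with `p'_{ij} = p_{ij} r_i s_j` for all `i, j`. -/
theorem theta_invariance_converse {n : ℕ} [NeZero n]
    (mu : Fin n × Fin n → Fin n × Fin n → ℤ)
    (hmu_self : ∀ x : Fin n × Fin n, mu x x = 1)
    (hmu_lt : ∀ x y : Fin n × Fin n, x < y →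
      mu x y = -∑ s ∈ Finset.univ.filter (fun s => x ≤ s ∧ s < y), mu x s)
    (hmu_nle : ∀ x y : Fin n × Fin n, ¬ x ≤ y → mu x y = 0)
    (p p' : Fin n × Fin n → ℝ)
    (hp : ∀ x, p x ∈ Set.Ioo (0 : ℝ) 1) (hpsum : ∑ x : Fin n × Fin n, p x = 1)
    (hp' : ∀ x, p' x ∈ Set.Ioo (0 : ℝ) 1) (hp'sum : ∑ x : Fin n × Fin n, p' x = 1)
    (htheta : ∀ x : Fin n × Fin n, x.1 ≠ 0 → x.2 ≠ 0 → thetaP mu p' x = thetaP mu p x) :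
    ∃ r s : Fin n → ℝ, (∀ i, 0 < r i) ∧ (∀ j, 0 < s j) ∧
      ∀ i j : Fin n, p' (i, j) = p (i, j) * r i * s j := by
  classical
  set f : Fin n × Fin n → ℝ := fun x => Real.log (p' x) - Real.log (p x) with hf
  set θ : Fin n × Fin n → ℝ :=
    fun x => ∑ s ∈ Finset.univ.filter (fun s => s ≤ x), (mu s x : ℝ) * f s with hθdef
  -- θ vanishes on the interior
  have hθ0 : ∀ x : Fin n × Fin n, x.1 ≠ 0 → x.2 ≠ 0 → θ x = 0 := by
    intro x h1 h2
    have : θ x = thetaP mu p' x - thetaP mu p x := by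
      simp only [hθdef, thetaP, hf, mul_sub, Finset.sum_sub_distrib]
    rw [this, htheta x h1 h2, sub_self]
  -- key Möbius identity: ∑_{s ≤ x} μ(t,s) = δ_{t,x}
  have hsum_mu : ∀ t x : Fin n × Fin n,
      (∑ s ∈ Finset.univ.filter (fun s => s ≤ x), mu t s) = if t = x then 1 else 0 := by
    intro t x
    by_cases htx : t ≤ x
    · by_cases heq : t = x
      · subst heq
        rw [if_pos rfl]
        have hm : t ∈ Finset.univ.filter (fun s : Fin n × Fin n => s ≤ t) :=
          Finset.mem_filter.2 ⟨Finset.mem_univ t, le_refl t⟩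
        rw [Finset.sum_eq_single_of_mem t hm (fun s hs hne =>
          hmu_nle t s (fun h => hne (le_antisymm (Finset.mem_filter.1 hs).2 h)))]
        exact hmu_self t
      · rw [if_neg heq]
        have hlt : t < x := lt_of_le_of_ne htx heq
        have hsub : (Finset.univ.filter (fun s => t ≤ s ∧ s ≤ x))
            ⊆ Finset.univ.filter (fun s : Fin n × Fin n => s ≤ x) := by
          intro s hs
          simp only [Finset.mem_filter] at hs ⊢
          exact ⟨hs.1, hs.2.2⟩
        rw [← Finset.sum_subset hsub (by
          intro s hs hns
          simp only [Finset.mem_filter] at hs hns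
          exact hmu_nle t s (fun h => hns ⟨hs.1, h, hs.2⟩))]
        have hins : Finset.univ.filter (fun s : Fin n × Fin n => t ≤ s ∧ s ≤ x)
            = insert x (Finset.univ.filter (fun s => t ≤ s ∧ s < x)) := by
          ext s
          simp only [Finset.mem_filter, Finset.mem_insert, Finset.mem_univ, true_and]
          constructor
          · rintro ⟨h1, h2⟩
            rcases lt_or_eq_of_le h2 with h | h
            · exact Or.inr ⟨h1, h⟩
            · exact Or.inl h
          · rintro (rfl | ⟨h1, h2⟩)
            · exact ⟨htx, le_refl _⟩
            · exact ⟨h1, le_of_lt h2⟩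
        rw [hins, Finset.sum_insert (by
          simp only [Finset.mem_filter]
          exact fun h => lt_irrefl x h.2.2), hmu_lt t x hlt]
        ring
    · rw [if_neg (fun h => htx (le_of_eq h))]
      apply Finset.sum_eq_zero
      intro s hs
      have hsle : s ≤ x := (Finset.mem_filter.1 hs).2
      exact hmu_nle t s (fun h => htx (le_trans h hsle))
  -- Möbius inversion: f x = ∑_{s ≤ x} θ s
  have hinv : ∀ x : Fin n × Fin n,
      f x = ∑ s ∈ Finset.univ.filter (fun s => s ≤ x), θ s := by
    intro x
    have step1 : ∀ s : Fin n × Fin n,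
        θ s = ∑ t : Fin n × Fin n, (mu t s : ℝ) * f t := by
      intro s
      rw [hθdef]
      refine Finset.sum_subset (Finset.subset_univ _) ?_
      intro t _ hts
      simp only [Finset.mem_filter, Finset.mem_univ, true_and] at hts
      rw [hmu_nle t s hts]
      simp
    calc f x = ∑ t : Fin n × Fin n, f t * (if t = x then 1 else 0) := by
          simp
      _ = ∑ t : Fin n × Fin n,
            f t * ((∑ s ∈ Finset.univ.filter (fun s => s ≤ x), mu t s : ℤ) : ℝ) := by
          refine Finset.sum_congr rfl fun t _ => ?_
          rw [hsum_mu t x]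
          by_cases h : t = x <;> simp [h]
      _ = ∑ t : Fin n × Fin n,
            ∑ s ∈ Finset.univ.filter (fun s => s ≤ x), (mu t s : ℝ) * f t := by
          refine Finset.sum_congr rfl fun t _ => ?_
          push_cast
          rw [Finset.mul_sum]
          exact Finset.sum_congr rfl fun s _ => mul_comm _ _
      _ = ∑ s ∈ Finset.univ.filter (fun s => s ≤ x), ∑ t : Fin n × Fin n,
            (mu t s : ℝ) * f t := Finset.sum_comm
      _ = ∑ s ∈ Finset.univ.filter (fun s => s ≤ x), θ s := by
          exact Finset.sum_congr rfl fun s _ => (step1 s).symm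
  -- rewrite the inversion sum over the product set
  have hprod : ∀ i j : Fin n,
      f (i, j) = ∑ a ∈ Finset.Iic i, ∑ b ∈ Finset.Iic j, θ (a, b) := by
    intro i j
    rw [hinv (i, j)]
    rw [show Finset.univ.filter (fun s : Fin n × Fin n => s ≤ (i, j))
        = Finset.Iic i ×ˢ Finset.Iic j by
      ext s
      simp [Finset.mem_filter, Finset.mem_product, Prod.le_def]]
    rw [Finset.sum_product]
  -- split: f(i,j) = A i + B j - θ(0,0)
  have h0mem : ∀ k : Fin n, (0 : Fin n) ∈ Finset.Iic k :=
    fun k => Finset.mem_Iic.2 (Fin.zero_le k)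
  have hsplit : ∀ i j : Fin n,
      f (i, j) = (∑ a ∈ Finset.Iic i, θ (a, 0)) + (∑ b ∈ Finset.Iic j, θ (0, b))
        - θ (0, 0) := by
    intro i j
    rw [hprod i j]
    have hinner : ∀ a : Fin n, ∑ b ∈ Finset.Iic j, θ (a, b)
        = θ (a, 0) + (if a = 0 then ∑ b ∈ (Finset.Iic j).erase 0, θ (0, b) else 0) := by
      intro a
      rw [← Finset.add_sum_erase _ _ (h0mem j)]
      congr 1
      by_cases ha : a = 0
      · subst ha; rw [if_pos rfl]
      · rw [if_neg ha]
        apply Finset.sum_eq_zero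
        intro b hb
        exact hθ0 (a, b) ha (Finset.ne_of_mem_erase hb)
    rw [Finset.sum_congr rfl (fun a _ => hinner a), Finset.sum_add_distrib,
      Finset.sum_ite_eq' (Finset.Iic i) 0 _, if_pos (h0mem i),
      ← Finset.add_sum_erase _ (fun b => θ (0, b)) (h0mem j)]
    ring
  -- construct r and s
  refine ⟨fun i => Real.exp ((∑ a ∈ Finset.Iic i, θ (a, 0)) - θ (0, 0)),
    fun j => Real.exp (∑ b ∈ Finset.Iic j, θ (0, b)),
    fun i => Real.exp_pos _, fun j => Real.exp_pos _, fun i j => ?_⟩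
  have hp'pos := (hp' (i, j)).1
  have hppos := (hp (i, j)).1
  have : Real.log (p' (i, j)) = Real.log (p (i, j))
      + ((∑ a ∈ Finset.Iic i, θ (a, 0)) - θ (0, 0))
      + (∑ b ∈ Finset.Iic j, θ (0, b)) := by
    have := hsplit i j
    simp only [hf] at this
    linarith
  calc p' (i, j) = Real.exp (Real.log (p' (i, j))) := (Real.exp_log hp'pos).symm
    _ = Real.exp (Real.log (p (i, j)))
        * Real.exp ((∑ a ∈ Finset.Iic i, θ (a, 0)) - θ (0, 0))
        * Real.exp (∑ b ∈ Finset.Iic j, θ (0, b)) := by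
        rw [this, Real.exp_add, Real.exp_add]
    _ = _ := by rw [Real.exp_log hppos]
end
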